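/- Let G be a minimally bad graph and O = [v_1,…,v_n] a bad connected order of G, with greedy colouring π = π_{G,O}. Then for every vertex x ∈ V(G) with x ≠ v_n one has π(x) ≤ χ(G), and π(v_n) = χ(G) + 1. -/

import Mathlib

/-!
Deleting the last vertex `v` of a bad connected order of a minimally bad graph `G` leaves a
connected order of the proper connected induced subgraph `G - v`, which is good; so every other
vertex gets a colour at most `χ(G - v) ≤ χ(G)`, and then `v` gets a colour at most `χ(G) + 1`.
As the order is bad, some vertex exceeds `χ(G)`, and it can only be `v`.
-/

open Classical in
noncomputable def greedyStep {V : Type*} (G : SimpleGraph V) (f : V → ℕ) (v : V) : V → ℕ :=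
  fun u => if u = v then sInf {c : ℕ | 1 ≤ c ∧ ∀ w, G.Adj v w → f w ≠ c} else f u

noncomputable def greedyFrom {V : Type*} (G : SimpleGraph V) (f : V → ℕ) (l : List V) : V → ℕ :=
  l.foldl (greedyStep G) f

noncomputable def greedy {V : Type*} (G : SimpleGraph V) (l : List V) : V → ℕ :=
  greedyFrom G (fun _ => 0) l

open Classical in
noncomputable def greedyStart2 {V : Type*} (G : SimpleGraph V) : List V → V → ℕ
  | [] => fun _ => 0
  | v :: rest => greedyFrom G (fun u => if u = v then 2 else 0) rest

noncomputable def chi {V : Type*} [Fintype V] (G : SimpleGraph V) : ℕ :=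
  sInf {n : ℕ | G.Colorable n}

open Classical in
noncomputable def idx {V : Type*} (l : List V) (v : V) : ℕ := l.idxOf v

noncomputable def maxIdx {V : Type*} (l : List V) (A : Set V) : ℕ := sSup (idx l '' A)
noncomputable def minIdx {V : Type*} (l : List V) (A : Set V) : ℕ := sInf (idx l '' A)

def IsConnOrder {V : Type*} (G : SimpleGraph V) (l : List V) : Prop :=
  l.Nodup ∧ (∀ v : V, v ∈ l) ∧
    ∀ i : Fin l.length, 0 < i.1 → ∃ j : Fin l.length, j.1 < i.1 ∧ G.Adj (l.get j) (l.get i)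

def GoodOrder {V : Type*} [Fintype V] (G : SimpleGraph V) (l : List V) : Prop :=
  ∀ v : V, greedy G l v ≤ chi G

def Good {V : Type*} [Fintype V] (G : SimpleGraph V) : Prop :=
  ∀ s : Finset V, (G.induce (↑s : Set V)).Connected →
    ∀ l : List ↥(↑s : Set V), IsConnOrder (G.induce (↑s : Set V)) l →
      GoodOrder (G.induce (↑s : Set V)) l

def BadOrder {V : Type*} [Fintype V] (G : SimpleGraph V) (l : List V) : Prop :=
  IsConnOrder G l ∧ ¬ GoodOrder G l

def MinimallyBad {V : Type*} [Fintype V] (G : SimpleGraph V) : Prop :=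
  ¬ Good G ∧ ∀ s : Finset V, s ≠ Finset.univ →
    (G.induce (↑s : Set V)).Connected → Good (G.induce (↑s : Set V))

def IsInducedPath {V : Type*} (G : SimpleGraph V) (P : List V) : Prop :=
  P.Nodup ∧ ∀ i j : Fin P.length,
    G.Adj (P.get i) (P.get j) ↔ (i.1 + 1 = j.1 ∨ j.1 + 1 = i.1)

def IsFlatPath {V : Type*} (G : SimpleGraph V) (P : List V) : Prop :=
  IsInducedPath G P ∧
    ∀ i : Fin P.length, 0 < i.1 → i.1 + 1 < P.length → (G.neighborSet (P.get i)).ncard = 2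

def WellOrderedPath {V : Type*} (l P : List V) : Prop :=
  P.Pairwise (fun u v => idx l u < idx l v) ∨ P.Pairwise (fun u v => idx l v < idx l u)

def IsMaxFlatPath {V : Type*} (G : SimpleGraph V) (P : List V) : Prop :=
  IsFlatPath G P ∧ ∀ h : P ≠ [],
    (G.neighborSet (P.head h)).ncard ≠ 2 ∧ (G.neighborSet (P.getLast h)).ncard ≠ 2

def ClawFree {V : Type*} (G : SimpleGraph V) : Prop :=
  ∀ a b c d : V, G.Adj a b → G.Adj a c → G.Adj a d → b ≠ c → b ≠ d → c ≠ d →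
    G.Adj b c ∨ G.Adj b d ∨ G.Adj c d

def IsHole {V : Type*} (G : SimpleGraph V) (C : List V) : Prop :=
  4 ≤ C.length ∧ C.Nodup ∧
    ∀ i j : Fin C.length, G.Adj (C.get i) (C.get j) ↔
      ((i.1 + 1) % C.length = j.1 ∨ (j.1 + 1) % C.length = i.1)

def GemFree {V : Type*} (G : SimpleGraph V) : Prop :=
  ¬ ∃ a b c d e : V, G.Adj a b ∧ G.Adj b c ∧ G.Adj c d ∧
    ¬ G.Adj a c ∧ ¬ G.Adj a d ∧ ¬ G.Adj b d ∧
    G.Adj e a ∧ G.Adj e b ∧ G.Adj e c ∧ G.Adj e d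

section GreedyColouring

open SimpleGraph

variable {V : Type*}

lemma greedyFrom_cons (G : SimpleGraph V) (f : V → ℕ) (v : V) (l : List V) :
    greedyFrom G f (v :: l) = greedyFrom G (greedyStep G f v) l := rfl

lemma greedy_append_singleton (G : SimpleGraph V) (l : List V) (v : V) :
    greedy G (l ++ [v]) = greedyStep G (greedy G l) v :=
  List.foldl_append

lemma greedyStep_of_ne (G : SimpleGraph V) (f : V → ℕ) {v u : V} (h : u ≠ v) :
    greedyStep G f v u = f u := by
  simp [greedyStep, h]

lemma greedyStep_self_le (G : SimpleGraph V) (f : V → ℕ) (v : V) {k : ℕ}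
    (h : ∀ w, G.Adj v w → f w ≤ k) : greedyStep G f v v ≤ k + 1 := by
  rw [greedyStep, if_pos rfl]
  exact Nat.sInf_le ⟨by omega, fun w hw => by have := h w hw; omega⟩

lemma greedyFrom_induce (G : SimpleGraph V) (s : Set V) (t : List V) (ht : ∀ x ∈ t, x ∈ s)
    (f : V → ℕ) (hf : ∀ x ∉ s, f x = 0) (x : s) :
    greedyFrom (G.induce s) (fun y => f y) (t.attachWith (· ∈ s) ht) x = greedyFrom G f t x := by
  induction t generalizing f with
  | nil => rfl
  | cons v t ih =>
    have hv : v ∈ s := ht v List.mem_cons_self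
    -- neighbours outside `s` carry the colour `0`, which never blocks a colour `c ≥ 1`
    have hfree : {c | 1 ≤ c ∧ ∀ w : s, (G.induce s).Adj ⟨v, hv⟩ w → f w ≠ c}
        = {c | 1 ≤ c ∧ ∀ w, G.Adj v w → f w ≠ c} := by
      ext c
      refine and_congr_right fun _ => ⟨fun h w hw => ?_, fun h w hw => h w hw⟩
      by_cases hws : w ∈ s
      · exact h ⟨w, hws⟩ hw
      · rw [hf w hws]; omega
    have hstep :
        greedyStep (G.induce s) (fun y => f y) ⟨v, hv⟩ = fun y : s => greedyStep G f v y := by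
      funext y
      by_cases hy : y = ⟨v, hv⟩
      · subst hy
        simp only [greedyStep, if_pos, hfree]
      · rw [greedyStep_of_ne _ _ hy, greedyStep_of_ne _ _ fun h => hy (Subtype.ext h)]
    rw [List.attachWith_cons, greedyFrom_cons, greedyFrom_cons, hstep]
    refine ih _ _ fun y hy => ?_
    rw [greedyStep_of_ne _ _ (by rintro rfl; exact hy hv)]
    exact hf y hy

lemma greedy_induce (G : SimpleGraph V) (s : Set V) (t : List V) (ht : ∀ x ∈ t, x ∈ s) (x : s) :
    greedy (G.induce s) (t.attachWith (· ∈ s) ht) x = greedy G t x :=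
  greedyFrom_induce G s t ht _ (fun _ _ => rfl) x

lemma chi_colorable [Fintype V] (G : SimpleGraph V) : G.Colorable (chi G) :=
  Nat.sInf_mem (s := {n | G.Colorable n}) ⟨_, G.colorable_of_fintype⟩

lemma chi_le_of_hom {W : Type*} [Fintype V] [Fintype W] {G : SimpleGraph V} {H : SimpleGraph W}
    (f : G →g H) : chi G ≤ chi H :=
  Nat.sInf_le ((chi_colorable H).of_hom f)

section ConnOrder

def IsConnSeq (G : SimpleGraph V) (l : List V) : Prop :=
  ∀ i : Fin l.length, 0 < i.1 → ∃ j : Fin l.length, j.1 < i.1 ∧ G.Adj (l.get j) (l.get i)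

variable {G : SimpleGraph V}

lemma IsConnSeq.of_append {t r : List V} (h : IsConnSeq G (t ++ r)) : IsConnSeq G t := by
  intro i hi
  obtain ⟨j, hj, hadj⟩ := h ⟨i.1, i.2.trans_le (by simp)⟩ hi
  have hjt : j.1 < t.length := hj.trans i.2
  refine ⟨⟨j.1, hjt⟩, hj, ?_⟩
  simpa [List.getElem_append_left, hjt] using hadj

lemma IsConnSeq.attachWith {s : Set V} {t : List V} (h : IsConnSeq G t) (ht : ∀ x ∈ t, x ∈ s) :
    IsConnSeq (G.induce s) (t.attachWith (· ∈ s) ht) := by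
  intro i hi
  obtain ⟨j, hj, hadj⟩ := h ⟨i.1, by simpa using i.2⟩ hi
  exact ⟨⟨j.1, by simp⟩, hj, by simpa using hadj⟩

lemma IsConnSeq.reachable_get_zero {l : List V} (h : IsConnSeq G l) (hl : 0 < l.length) :
    ∀ i : Fin l.length, G.Reachable (l.get ⟨0, hl⟩) (l.get i)
  | ⟨0, _⟩ => Reachable.refl _
  | ⟨k + 1, hk⟩ => by
    obtain ⟨j, hj, hadj⟩ := h ⟨k + 1, hk⟩ k.succ_pos
    exact (h.reachable_get_zero hl j).trans hadj.reachable
termination_by i => i.1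
decreasing_by exact hj

lemma IsConnOrder.connected [Nonempty V] {l : List V} (h : IsConnOrder G l) : G.Connected := by
  obtain ⟨-, hcover, hseq : IsConnSeq G l⟩ := h
  have hl : 0 < l.length := List.length_pos_of_mem (hcover (Classical.arbitrary V))
  refine (connected_iff G).2 ⟨fun u v => ?_, inferInstance⟩
  obtain ⟨iu, rfl⟩ := List.get_of_mem (hcover u)
  obtain ⟨iv, rfl⟩ := List.get_of_mem (hcover v)
  exact (hseq.reachable_get_zero hl iu).symm.trans (hseq.reachable_get_zero hl iv)

lemma isConnOrder_induce_attachWith {s : Set V} {t : List V} (hnd : t.Nodup)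
    (hcover : ∀ x ∈ s, x ∈ t) (hseq : IsConnSeq G t) (ht : ∀ x ∈ t, x ∈ s) :
    IsConnOrder (G.induce s) (t.attachWith (· ∈ s) ht) := by
  refine ⟨?_, fun x => ?_, hseq.attachWith ht⟩
  · exact List.Nodup.of_map Subtype.val (by rwa [List.attachWith_map_subtype_val])
  · simpa using hcover x x.2

end ConnOrder

lemma Good.greedy_le_chi [Fintype V] {G : SimpleGraph V} (hG : Good G) {l : List V}
    (hl : IsConnOrder G l) (v : V) : greedy G l v ≤ chi G := by
  have ht : ∀ x ∈ l, x ∈ (↑(Finset.univ : Finset V) : Set V) := fun x _ => by simp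
  have hl' := isConnOrder_induce_attachWith hl.1 (fun x _ => hl.2.1 x) hl.2.2 ht
  have hv : v ∈ (↑(Finset.univ : Finset V) : Set V) := by simp
  have : Nonempty (↑(Finset.univ : Finset V) : Set V) := ⟨⟨v, hv⟩⟩
  calc greedy G l v = greedy (G.induce _) (l.attachWith _ ht) ⟨v, hv⟩ :=
      (greedy_induce G _ l ht ⟨v, hv⟩).symm
    _ ≤ chi (G.induce _) := hG _ hl'.connected _ hl' _
    _ ≤ chi G := chi_le_of_hom (Embedding.induce _).toHom

lemma greedy_le_chi_of_proper_prefix [Fintype V] {G : SimpleGraph V}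
    (hproper : ∀ s : Finset V, s ≠ Finset.univ →
      (G.induce (↑s : Set V)).Connected → Good (G.induce (↑s : Set V)))
    {t r : List V} {v : V} (hl : IsConnOrder G (t ++ v :: r)) {x : V} (hx : x ∈ t) :
    greedy G t x ≤ chi G := by
  classical
  obtain ⟨hnd, hcover, hseq⟩ := hl
  have hvt : v ∉ t := fun h => List.disjoint_of_nodup_append hnd h List.mem_cons_self
  have ht : ∀ y ∈ t, y ∈ (↑t.toFinset : Set V) := fun y hy => List.mem_toFinset.2 hy
  have hs : t.toFinset ≠ Finset.univ := fun h => hvt (List.mem_toFinset.1 (h ▸ Finset.mem_univ v))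
  have ht' := isConnOrder_induce_attachWith (G := G) (List.nodup_append.1 hnd).1
    (fun y hy => List.mem_toFinset.1 hy) (IsConnSeq.of_append hseq) ht
  have : Nonempty (↑t.toFinset : Set V) := ⟨⟨x, ht x hx⟩⟩
  calc greedy G t x = greedy (G.induce _) (t.attachWith _ ht) ⟨x, ht x hx⟩ :=
      (greedy_induce G _ t ht ⟨x, ht x hx⟩).symm
    _ ≤ chi (G.induce _) := (hproper _ hs ht'.connected).greedy_le_chi ht' _
    _ ≤ chi G := chi_le_of_hom (Embedding.induce _).toHom

end GreedyColouring

theorem stmt2 {V : Type*} [Fintype V] (G : SimpleGraph V) (l : List V)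
    (hmin : MinimallyBad G) (hbad : BadOrder G l)
    (vn : V) (hvn : l.getLast? = some vn) :
    (∀ x : V, x ≠ vn → greedy G l x ≤ chi G) ∧ greedy G l vn = chi G + 1 := by
  obtain ⟨t, rfl⟩ := List.getLast?_eq_some_iff.1 hvn
  have hothers : ∀ x, x ≠ vn → greedy G (t ++ [vn]) x ≤ chi G := by
    intro x hx
    have hxt : x ∈ t := by simpa [hx] using hbad.1.2.1 x
    rw [greedy_append_singleton, greedyStep_of_ne _ _ hx]
    exact greedy_le_chi_of_proper_prefix hmin.2 hbad.1 hxt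
  refine ⟨hothers, le_antisymm ?_ ?_⟩
  · rw [greedy_append_singleton]
    refine greedyStep_self_le _ _ _ fun w hw => ?_
    have hwv : w ≠ vn := (G.ne_of_adj hw).symm
    simpa [greedy_append_singleton, greedyStep_of_ne _ _ hwv] using hothers w hwv
  · obtain ⟨v, hv⟩ := not_forall.1 hbad.2
    obtain rfl : v = vn := by_contra fun h => hv (hothers v h)
    omega
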